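/- Let S be a positively directed ordered commutative monoid with S_max nonempty, and let e denote the neutral element of the abelian group S_max. Then S_max is absorbing: for every x ∈ S and every m ∈ S_max, x + m ∈ S_max. -/

import Mathlib

/-- The set of maximal elements of an ordered monoid. -/
def maxSet (S : Type*) [Preorder S] : Set S := {x | ∀ y, x ≤ y → y = x}

theorem add_mem_maxSet_of_nonneg_add {S : Type*} [AddCommMonoid S] [PartialOrder S]
    [IsOrderedAddMonoid S] {x p m : S} (hp : 0 ≤ x + p) (hm : m ∈ maxSet S) :
    x + m ∈ maxSet S := by
  intro y hy
  -- `p` undoes `x` up to a nonnegative error, so maximality of `m` pins down `y + p`.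
  have hyp : y + p = m := hm _ <| calc
    m ≤ m + (x + p) := le_add_of_nonneg_right hp
    _ = x + m + p := by abel
    _ ≤ y + p := add_le_add_left hy p
  refine le_antisymm ?_ hy
  calc y ≤ y + (x + p) := le_add_of_nonneg_right hp
    _ = x + (y + p) := by abel
    _ = x + m := by rw [hyp]

theorem maxSet_absorbing_general {S : Type*} [AddCommMonoid S] [PartialOrder S] [IsOrderedAddMonoid S]
    (hdir : ∀ x : S, ∃ p : S, 0 ≤ x + p) :
    ∀ x : S, ∀ m ∈ maxSet S, x + m ∈ maxSet S := by
  intro x m hm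
  obtain ⟨p, hp⟩ := hdir x
  exact add_mem_maxSet_of_nonneg_add hp hm

/-- In a positively directed ordered commutative monoid with nonempty set of maximal
elements, the maximal elements are absorbing: `x + m` is maximal for every `x ∈ S`
and every maximal `m`. -/
theorem maxSet_absorbing {S : Type*} [AddCommMonoid S] [PartialOrder S] [IsOrderedAddMonoid S]
    (hdir : ∀ x : S, ∃ p : S, 0 ≤ x + p)
    (hne : (maxSet S).Nonempty) :
    ∀ x : S, ∀ m ∈ maxSet S, x + m ∈ maxSet S :=
  maxSet_absorbing_general hdir
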